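/- REINFORCE for a two-step MDP (finite): let S, A be finite types, with initial state distribution ρ : S → ℝ, parameterized policy π : ℝ → S → A → ℝ (a differentiable conditional pmf), transition kernel P : S → A → S → ℝ (θ-independent conditional pmf), and rewards r : S → A → ℝ. Define J(θ) = ∑ s₁ a₁ s₂ a₂, ρ s₁ * π θ s₁ a₁ * P s₁ a₁ s₂ * π θ s₂ a₂ * (r s₁ a₁ + r s₂ a₂). Then at θ₀ with all policy probabilities positive, deriv J θ₀ = ∑ s₁ a₁ s₂ a₂, ρ s₁ * π θ₀ s₁ a₁ * P s₁ a₁ s₂ * π θ₀ s₂ a₂ * (deriv (fun θ => Real.log (π θ s₁ a₁)) θ₀ * (r s₁ a₁ + r s₂ a₂) + deriv (fun θ => Real.log (π θ s₂ a₂)) θ₀ * r s₂ a₂). -/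

import Mathlib

/-!
Writing `π' = π · (log π)'` turns the product rule for the trajectory weight
`ρ π₁ P π₂` into the weight times the total score `(log π₁)' + (log π₂)'`.
This gives the claimed formula plus the extra term `ρ π₁ P r₁ · π₂ (log π₂)'`,
and that term vanishes after summing over the second action: the expected score
`∑ₐ π (log π)' = (∑ₐ π)'` is zero because the policy probabilities sum to one.
-/

open Finset

theorem mul_deriv_log_eq_deriv {f : ℝ → ℝ} {x : ℝ} (hf : DifferentiableAt ℝ f x)
    (hx : f x ≠ 0) : f x * deriv (fun θ => Real.log (f θ)) x = deriv f x := by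
  rw [deriv.log hf hx, mul_div_cancel₀ _ hx]

theorem hasDerivAt_mul_deriv_log {f : ℝ → ℝ} {x : ℝ} (hf : DifferentiableAt ℝ f x)
    (hx : f x ≠ 0) : HasDerivAt f (f x * deriv (fun θ => Real.log (f θ)) x) x := by
  rw [mul_deriv_log_eq_deriv hf hx]
  exact hf.hasDerivAt

theorem sum_deriv_eq_zero_of_sum_eq_const {ι : Type*} [Fintype ι] {f : ι → ℝ → ℝ}
    {c x : ℝ} (hf : ∀ i, DifferentiableAt ℝ (f i) x) (hsum : ∀ θ, ∑ i, f i θ = c) :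
    ∑ i, deriv (f i) x = 0 := by
  rw [← deriv_fun_sum fun i _ => hf i, funext hsum, deriv_const]

theorem sum_mul_deriv_log_eq_zero_of_sum_eq_const {ι : Type*} [Fintype ι]
    {f : ι → ℝ → ℝ} {c x : ℝ} (hf : ∀ i, DifferentiableAt ℝ (f i) x)
    (hx : ∀ i, f i x ≠ 0) (hsum : ∀ θ, ∑ i, f i θ = c) :
    ∑ i, f i x * deriv (fun θ => Real.log (f i θ)) x = 0 := by
  simp only [mul_deriv_log_eq_deriv (hf _) (hx _)]
  exact sum_deriv_eq_zero_of_sum_eq_const hf hsum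

theorem reinforce_two_step_mdp_general
    {S A : Type*} [Fintype S] [Fintype A]
    (ρ : S → ℝ) (π : ℝ → S → A → ℝ) (P : S → A → S → ℝ) (r : S → A → ℝ) (θ₀ : ℝ)
    (hπsum : ∀ θ s, ∑ a, π θ s a = 1)
    (hπdiff : ∀ s a, Differentiable ℝ (fun θ => π θ s a))
    (hπpos : ∀ s a, 0 < π θ₀ s a) :
    deriv (fun θ => ∑ s₁, ∑ a₁, ∑ s₂, ∑ a₂,
      ρ s₁ * π θ s₁ a₁ * P s₁ a₁ s₂ * π θ s₂ a₂ * (r s₁ a₁ + r s₂ a₂)) θ₀ =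
    ∑ s₁, ∑ a₁, ∑ s₂, ∑ a₂,
      ρ s₁ * π θ₀ s₁ a₁ * P s₁ a₁ s₂ * π θ₀ s₂ a₂ *
        (deriv (fun θ => Real.log (π θ s₁ a₁)) θ₀ * (r s₁ a₁ + r s₂ a₂) +
         deriv (fun θ => Real.log (π θ s₂ a₂)) θ₀ * r s₂ a₂) := by
  set g : S → A → ℝ := fun s a => deriv (fun θ => Real.log (π θ s a)) θ₀
  have hπ' (s a) : HasDerivAt (fun θ => π θ s a) (π θ₀ s a * g s a) θ₀ :=
    hasDerivAt_mul_deriv_log (hπdiff s a θ₀) (hπpos s a).ne'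
  have hscore (s) : ∑ a, π θ₀ s a * g s a = 0 :=
    sum_mul_deriv_log_eq_zero_of_sum_eq_const (fun a => hπdiff s a θ₀)
      (fun a => (hπpos s a).ne') (hπsum · s)
  have hJ := HasDerivAt.fun_sum (u := univ) fun s₁ _ =>
    HasDerivAt.fun_sum (u := univ) fun a₁ _ =>
    HasDerivAt.fun_sum (u := univ) fun s₂ _ =>
    HasDerivAt.fun_sum (u := univ) fun a₂ _ =>
      ((((hπ' s₁ a₁).const_mul (ρ s₁)).mul_const (P s₁ a₁ s₂)).fun_mul
        (hπ' s₂ a₂)).mul_const (r s₁ a₁ + r s₂ a₂)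
  rw [hJ.deriv]
  refine sum_congr rfl fun s₁ _ => sum_congr rfl fun a₁ _ => sum_congr rfl fun s₂ _ => ?_
  have hsplit (a₂ : A) :
      (ρ s₁ * (π θ₀ s₁ a₁ * g s₁ a₁) * P s₁ a₁ s₂ * π θ₀ s₂ a₂ +
          ρ s₁ * π θ₀ s₁ a₁ * P s₁ a₁ s₂ * (π θ₀ s₂ a₂ * g s₂ a₂)) * (r s₁ a₁ + r s₂ a₂) =
        ρ s₁ * π θ₀ s₁ a₁ * P s₁ a₁ s₂ * π θ₀ s₂ a₂ *
            (g s₁ a₁ * (r s₁ a₁ + r s₂ a₂) + g s₂ a₂ * r s₂ a₂) +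
          ρ s₁ * π θ₀ s₁ a₁ * P s₁ a₁ s₂ * r s₁ a₁ * (π θ₀ s₂ a₂ * g s₂ a₂) := by
    ring
  rw [sum_congr rfl fun a₂ _ => hsplit a₂, sum_add_distrib, ← mul_sum, hscore, mul_zero,
    add_zero]

theorem reinforce_two_step_mdp
    {S A : Type*} [Fintype S] [Fintype A]
    (ρ : S → ℝ) (π : ℝ → S → A → ℝ) (P : S → A → S → ℝ) (r : S → A → ℝ) (θ₀ : ℝ)
    (hρnn : ∀ s, 0 ≤ ρ s) (hρsum : ∑ s, ρ s = 1)
    (hπnn : ∀ θ s a, 0 ≤ π θ s a) (hπsum : ∀ θ s, ∑ a, π θ s a = 1)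
    (hπdiff : ∀ s a, Differentiable ℝ (fun θ => π θ s a))
    (hπpos : ∀ s a, 0 < π θ₀ s a)
    (hPnn : ∀ s a s', 0 ≤ P s a s') (hPsum : ∀ s a, ∑ s', P s a s' = 1) :
    deriv (fun θ => ∑ s₁, ∑ a₁, ∑ s₂, ∑ a₂,
      ρ s₁ * π θ s₁ a₁ * P s₁ a₁ s₂ * π θ s₂ a₂ * (r s₁ a₁ + r s₂ a₂)) θ₀ =
    ∑ s₁, ∑ a₁, ∑ s₂, ∑ a₂,
      ρ s₁ * π θ₀ s₁ a₁ * P s₁ a₁ s₂ * π θ₀ s₂ a₂ *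
        (deriv (fun θ => Real.log (π θ s₁ a₁)) θ₀ * (r s₁ a₁ + r s₂ a₂) +
         deriv (fun θ => Real.log (π θ s₂ a₂)) θ₀ * r s₂ a₂) :=
  reinforce_two_step_mdp_general ρ π P r θ₀ hπsum hπdiff hπpos
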